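/- (Monotonicity and Lipschitz properties of the Hamiltonian) Fix q > 0, η > 0, L > 0, δ > 0, T > 0, and if q ≠ 1 assume there is 𝔤 > 0 with 1 − 2|1−q|η^{-1}L ≥ 𝔤. Let c : [0,T] × Ω → ℝ be a bounded function and define, for t ∈ [0,T], x ∈ Ω, u ∈ ℝ, f a bounded measurable function on [0,T] × Ω, and Q ∈ ℝ, H(t,x,u,f,Q) = −Q + δu − c(t,x) − η ln_q( ∫_Ω exp_q( η^{-1} min{2L, max{−2L, f(t,z) − u}} ) dz ). Then: (i) H is monotone increasing in u: for all t,x,f,Q, if u₁ ≤ u₂ then H(t,x,u₁,f,Q) ≤ H(t,x,u₂,f,Q), with equality if and only if u₁ = u₂; (ii) H is decreasing in f: if f₁ ≤ f₂ pointwise on [0,T] × Ω then H(t,x,u,f₁,Q) ≥ H(t,x,u,f₂,Q) for all t,x,u,Q; (iii) H is Lipschitz in Q with constant 1: |H(t,x,u,f,Q₁) − H(t,x,u,f,Q₂)| ≤ |Q₁ − Q₂|. -/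
import Mathlib


open MeasureTheory Real

noncomputable section

/-- The action space `Ω = [0,1]`. -/
abbrev Ω : Type := Set.Icc (0:ℝ) 1

/-- Tsallis deformed exponential `exp_q`. -/
noncomputable def texp (q z : ℝ) : ℝ :=
  if q = 1 then Real.exp z else (max (1 + (1 - q) * z) 0) ^ ((1:ℝ) / (1 - q))

/-- Tsallis deformed logarithm `ln_q`. -/
noncomputable def tlog (q y : ℝ) : ℝ :=
  if q = 1 then Real.log y else (y ^ (1 - q) - 1) / (1 - q)

/-- The (modified) Hamiltonian
`H(t,x,u,f,Q) = −Q + δu − c(t,x) − η ln_q( ∫_Ω exp_q(η⁻¹ min{2L, max{−2L, f(t,z) − u}}) dz )`. -/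
noncomputable def Ham (q η L δ : ℝ) (c : ℝ → Ω → ℝ) (t : ℝ) (x : Ω) (u : ℝ)
    (f : ℝ → Ω → ℝ) (Q : ℝ) : ℝ :=
  -Q + δ * u - c t x -
    η * tlog q (∫ z : Ω, texp q (η⁻¹ * min (2 * L) (max (-(2 * L)) (f t z - u))))

lemma texp_nonneg (q z : ℝ) : 0 ≤ texp q z := by
  unfold texp; split_ifs
  · exact (Real.exp_pos _).le
  · exact Real.rpow_nonneg (le_max_right _ _) _

lemma texp_pos (q z : ℝ) (h : q ≠ 1 → 0 < 1 + (1 - q) * z) : 0 < texp q z := by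
  unfold texp; split_ifs with h1
  · exact Real.exp_pos _
  · exact Real.rpow_pos_of_pos (lt_max_of_lt_left (h h1)) _

lemma texp_measurable (q : ℝ) : Measurable (texp q) := by
  unfold texp; split_ifs
  · exact Real.measurable_exp
  · fun_prop

lemma texp_mono (q : ℝ) {z₁ z₂ : ℝ}
    (h₁ : q ≠ 1 → 0 < 1 + (1 - q) * z₁) (h₂ : q ≠ 1 → 0 < 1 + (1 - q) * z₂)
    (hz : z₁ ≤ z₂) : texp q z₁ ≤ texp q z₂ := by
  unfold texp; split_ifs with hq1
  · exact Real.exp_le_exp.mpr hz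
  · rcases lt_or_gt_of_ne hq1 with h | h
    · have hle : 1 + (1 - q) * z₁ ≤ 1 + (1 - q) * z₂ := by nlinarith
      exact Real.rpow_le_rpow (le_max_right _ _) (max_le_max hle le_rfl)
        (le_of_lt (one_div_pos.mpr (by linarith)))
    · have hb2 : 0 < 1 + (1 - q) * z₂ := h₂ hq1
      have hb1 : 0 < 1 + (1 - q) * z₁ := h₁ hq1
      have hle : 1 + (1 - q) * z₂ ≤ 1 + (1 - q) * z₁ := by nlinarith
      rw [max_eq_left hb1.le, max_eq_left hb2.le]
      exact Real.rpow_le_rpow_of_nonpos hb2 hle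
        (le_of_lt (one_div_neg.mpr (by linarith)))

lemma tlog_mono (q : ℝ) {y₁ y₂ : ℝ} (h₁ : 0 < y₁) (hy : y₁ ≤ y₂) :
    tlog q y₁ ≤ tlog q y₂ := by
  unfold tlog; split_ifs with hq1
  · exact Real.log_le_log h₁ hy
  · rcases lt_or_gt_of_ne hq1 with h | h
    · have hr : y₁ ^ (1 - q) ≤ y₂ ^ (1 - q) :=
        Real.rpow_le_rpow h₁.le hy (by linarith)
      have hpos : (0:ℝ) < 1 - q := by linarith
      rw [div_eq_mul_inv, div_eq_mul_inv]
      exact mul_le_mul_of_nonneg_right (by linarith) (inv_nonneg.mpr hpos.le)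
    · have hr : y₂ ^ (1 - q) ≤ y₁ ^ (1 - q) :=
        Real.rpow_le_rpow_of_nonpos h₁ hy (by linarith)
      have hneg : (1 - q) < 0 := by linarith
      rw [div_eq_mul_inv, div_eq_mul_inv]
      exact mul_le_mul_of_nonpos_right (by linarith) (inv_nonpos.mpr hneg.le)

/-- Monotonicity and Lipschitz properties of the Hamiltonian:
(i) `H` is increasing in `u`, with equality iff `u₁ = u₂`;
(ii) `H` is decreasing in `f` (pointwise order on `[0,T] × Ω`);
(iii) `H` is 1-Lipschitz in `Q`. -/
theorem hamiltonian_properties (q η L δ T : ℝ)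
    (hq : 0 < q) (hη : 0 < η) (hL : 0 < L) (hδ : 0 < δ) (hT : 0 < T)
    (hA2 : q ≠ 1 → ∃ g > 0, 1 - 2 * |1 - q| * η⁻¹ * L ≥ g)
    (c : ℝ → Ω → ℝ) (hc : ∃ C : ℝ, ∀ (t : ℝ) (x : Ω), |c t x| ≤ C) :
    (∀ f : ℝ → Ω → ℝ, (∀ t, Measurable (f t)) → (∃ C : ℝ, ∀ t z, |f t z| ≤ C) →
      ∀ t ∈ Set.Icc (0:ℝ) T, ∀ (x : Ω) (u₁ u₂ Q : ℝ), u₁ ≤ u₂ →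
        Ham q η L δ c t x u₁ f Q ≤ Ham q η L δ c t x u₂ f Q ∧
        (Ham q η L δ c t x u₁ f Q = Ham q η L δ c t x u₂ f Q ↔ u₁ = u₂)) ∧
    (∀ f₁ f₂ : ℝ → Ω → ℝ,
      (∀ t, Measurable (f₁ t)) → (∃ C : ℝ, ∀ t z, |f₁ t z| ≤ C) →
      (∀ t, Measurable (f₂ t)) → (∃ C : ℝ, ∀ t z, |f₂ t z| ≤ C) →
      (∀ t ∈ Set.Icc (0:ℝ) T, ∀ z : Ω, f₁ t z ≤ f₂ t z) →
      ∀ t ∈ Set.Icc (0:ℝ) T, ∀ (x : Ω) (u Q : ℝ),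
        Ham q η L δ c t x u f₂ Q ≤ Ham q η L δ c t x u f₁ Q) ∧
    (∀ f : ℝ → Ω → ℝ, (∀ t, Measurable (f t)) → (∃ C : ℝ, ∀ t z, |f t z| ≤ C) →
      ∀ t ∈ Set.Icc (0:ℝ) T, ∀ (x : Ω) (u Q₁ Q₂ : ℝ),
        |Ham q η L δ c t x u f Q₁ - Ham q η L δ c t x u f Q₂| ≤ |Q₁ - Q₂|) := by
  have hηinv : 0 < η⁻¹ := inv_pos.mpr hη
  -- positivity of the base of the deformed exponential in the relevant range
  have key : ∀ w : ℝ, -(2 * L) ≤ w → w ≤ 2 * L → q ≠ 1 →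
      0 < 1 + (1 - q) * (η⁻¹ * w) := by
    intro w hw1 hw2 hne
    obtain ⟨g, hg0, hg⟩ := hA2 hne
    have hw : |w| ≤ 2 * L := abs_le.mpr ⟨hw1, hw2⟩
    have habs : |(1 - q) * (η⁻¹ * w)| ≤ 2 * |1 - q| * η⁻¹ * L := by
      rw [abs_mul, abs_mul, abs_of_pos hηinv]
      calc |1 - q| * (η⁻¹ * |w|) ≤ |1 - q| * (η⁻¹ * (2 * L)) :=
            mul_le_mul_of_nonneg_left (mul_le_mul_of_nonneg_left hw hηinv.le) (abs_nonneg _)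
        _ = 2 * |1 - q| * η⁻¹ * L := by ring
    nlinarith [neg_abs_le ((1 - q) * (η⁻¹ * w))]
  have hclamp_lb : ∀ v : ℝ, -(2 * L) ≤ min (2 * L) (max (-(2 * L)) v) :=
    fun v => le_min (by linarith) (le_max_left _ _)
  have hclamp_ub : ∀ v : ℝ, min (2 * L) (max (-(2 * L)) v) ≤ 2 * L :=
    fun v => min_le_left _ _
  have hclamp_mono : ∀ v₁ v₂ : ℝ, v₁ ≤ v₂ →
      min (2 * L) (max (-(2 * L)) v₁) ≤ min (2 * L) (max (-(2 * L)) v₂) :=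
    fun _ _ h => min_le_min le_rfl (max_le_max le_rfl h)
  have hposz : ∀ v : ℝ, q ≠ 1 →
      0 < 1 + (1 - q) * (η⁻¹ * min (2 * L) (max (-(2 * L)) v)) :=
    fun v => key _ (hclamp_lb v) (hclamp_ub v)
  have htexp_ub : ∀ v : ℝ,
      texp q (η⁻¹ * min (2 * L) (max (-(2 * L)) v)) ≤ texp q (η⁻¹ * (2 * L)) := by
    intro v
    exact texp_mono q (hposz v) (key _ (by linarith) le_rfl)
      (mul_le_mul_of_nonneg_left (hclamp_ub v) hηinv.le)
  have htexp_lb : ∀ v : ℝ,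
      texp q (η⁻¹ * (-(2 * L))) ≤ texp q (η⁻¹ * min (2 * L) (max (-(2 * L)) v)) := by
    intro v
    exact texp_mono q (key _ le_rfl (by linarith)) (hposz v)
      (mul_le_mul_of_nonneg_left (hclamp_lb v) hηinv.le)
  have hm : 0 < texp q (η⁻¹ * (-(2 * L))) :=
    texp_pos _ _ (fun hne => key _ le_rfl (by linarith) hne)
  -- integrability
  have hint : ∀ h : Ω → ℝ, Measurable h →
      Integrable (fun z : Ω => texp q (η⁻¹ * min (2 * L) (max (-(2 * L)) (h z)))) := by
    intro h hh
    have hmeas : Measurable fun z : Ω =>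
        texp q (η⁻¹ * min (2 * L) (max (-(2 * L)) (h z))) :=
      (texp_measurable q).comp
        ((measurable_const.min (measurable_const.max hh)).const_mul _)
    refine ⟨hmeas.aestronglyMeasurable, ?_⟩
    apply HasFiniteIntegral.of_bounded (C := texp q (η⁻¹ * (2 * L)))
    filter_upwards with z
    rw [Real.norm_eq_abs, abs_of_nonneg (texp_nonneg _ _)]
    exact htexp_ub _
  -- positivity of the integral
  have hJpos : ∀ h : Ω → ℝ, Measurable h →
      0 < ∫ z : Ω, texp q (η⁻¹ * min (2 * L) (max (-(2 * L)) (h z))) := by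
    intro h hh
    have h1 : (∫ _ : Ω, texp q (η⁻¹ * (-(2 * L)))) = texp q (η⁻¹ * (-(2 * L))) := by
      simp
    calc (0:ℝ) < texp q (η⁻¹ * (-(2 * L))) := hm
      _ = ∫ _ : Ω, texp q (η⁻¹ * (-(2 * L))) := h1.symm
      _ ≤ _ := integral_mono (integrable_const _) (hint h hh) (fun z => htexp_lb _)
  -- monotonicity of the integral in the inner function
  have hJmono : ∀ h₁ h₂ : Ω → ℝ, Measurable h₁ → Measurable h₂ → (∀ z, h₁ z ≤ h₂ z) →
      (∫ z : Ω, texp q (η⁻¹ * min (2 * L) (max (-(2 * L)) (h₁ z)))) ≤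
        ∫ z : Ω, texp q (η⁻¹ * min (2 * L) (max (-(2 * L)) (h₂ z))) := by
    intro h₁ h₂ m₁ m₂ hle
    exact integral_mono (hint h₁ m₁) (hint h₂ m₂)
      (fun z => texp_mono q (hposz _) (hposz _)
        (mul_le_mul_of_nonneg_left (hclamp_mono _ _ (hle z)) hηinv.le))
  refine ⟨?_, ?_, ?_⟩
  · -- (i) monotone in u, strict
    intro f hf hfb t ht x u₁ u₂ Q hu
    have hm1 : Measurable fun z : Ω => f t z - u₁ := (hf t).sub measurable_const
    have hm2 : Measurable fun z : Ω => f t z - u₂ := (hf t).sub measurable_const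
    have hJ : (∫ z : Ω, texp q (η⁻¹ * min (2 * L) (max (-(2 * L)) (f t z - u₂)))) ≤
        ∫ z : Ω, texp q (η⁻¹ * min (2 * L) (max (-(2 * L)) (f t z - u₁))) :=
      hJmono _ _ hm2 hm1 (fun z => by linarith)
    have hTl : tlog q (∫ z : Ω, texp q (η⁻¹ * min (2 * L) (max (-(2 * L)) (f t z - u₂)))) ≤
        tlog q (∫ z : Ω, texp q (η⁻¹ * min (2 * L) (max (-(2 * L)) (f t z - u₁)))) :=
      tlog_mono q (hJpos _ hm2) hJ
    have hmul := mul_le_mul_of_nonneg_left hTl hη.le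
    have hstrict : u₁ < u₂ → Ham q η L δ c t x u₁ f Q < Ham q η L δ c t x u₂ f Q := by
      intro hlt
      have : δ * u₁ < δ * u₂ := mul_lt_mul_of_pos_left hlt hδ
      simp only [Ham]; linarith
    constructor
    · have : δ * u₁ ≤ δ * u₂ := mul_le_mul_of_nonneg_left hu hδ.le
      simp only [Ham]; linarith
    · constructor
      · intro heq
        by_contra hne
        exact absurd heq (ne_of_lt (hstrict (lt_of_le_of_ne hu hne)))
      · intro heq; rw [heq]
  · -- (ii) decreasing in f
    intro f₁ f₂ hf₁ hb₁ hf₂ hb₂ hle t ht x u Q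
    have hm1 : Measurable fun z : Ω => f₁ t z - u := (hf₁ t).sub measurable_const
    have hm2 : Measurable fun z : Ω => f₂ t z - u := (hf₂ t).sub measurable_const
    have hJ : (∫ z : Ω, texp q (η⁻¹ * min (2 * L) (max (-(2 * L)) (f₁ t z - u)))) ≤
        ∫ z : Ω, texp q (η⁻¹ * min (2 * L) (max (-(2 * L)) (f₂ t z - u))) :=
      hJmono _ _ hm1 hm2 (fun z => by have := hle t ht z; linarith)
    have hTl := tlog_mono q (hJpos _ hm1) hJ
    have hmul := mul_le_mul_of_nonneg_left hTl hη.le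
    simp only [Ham]; linarith
  · -- (iii) 1-Lipschitz in Q
    intro f hf hfb t ht x u Q₁ Q₂
    have : Ham q η L δ c t x u f Q₁ - Ham q η L δ c t x u f Q₂ = Q₂ - Q₁ := by
      simp only [Ham]; ring
    rw [this, abs_sub_comm]

end
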